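/- arXiv:2202.11517 — 2 statements merged into one kernel-verified Lean document; each statement's English description precedes it below -/
import Mathlib

section
/- Let Y = [0,1] ⊂ ℝ, let F be a homeomorphism of ℝ × Y commuting with T(x,y) = (x+1,y), and let S : ℝ × Y → ℝ × Y be the reflection S(x,y) = (−x, y). If there exists l ∈ ℤ such that F(S(F(S(z)))) = z + (l, 0) for all z ∈ ℝ × Y, then l = 0; in particular F ∘ S is an involution. -/
/-! `G = F ∘ S` conjugates `T` to `T⁻¹`, because `F` commutes with `T` while
`S ∘ T = T⁻¹ ∘ S`. Computing `G³ z` as `G (G² z) = G (Tˡ z) = T⁻ˡ (G z)` and as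
`G² (G z) = Tˡ (G z)` gives `Tˡ = T⁻ˡ`, hence `l = 0`. -/

open Filter Topology

/-- The strip `ℝ × [0,1]`. -/
abbrev StripC : Type := ℝ × ↥(Set.Icc (0 : ℝ) 1)

/-- The translation `T(x, y) = (x + 1, y)`. -/
def deckC : StripC → StripC := fun p => (p.1 + 1, p.2)

/-- The reflection `S(x, y) = (−x, y)` of the strip. -/
def reflS : StripC → StripC := fun p => (-p.1, p.2)

section Strip

variable {Y : Type*}

theorem map_add_natCast_of_map_add_one {f : ℝ × Y → ℝ × Y}
    (h : ∀ p : ℝ × Y, f (p.1 + 1, p.2) = ((f p).1 + 1, (f p).2)) (n : ℕ) (p : ℝ × Y) :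
    f (p.1 + n, p.2) = ((f p).1 + n, (f p).2) := by
  induction n with
  | zero => simp
  | succ n ih =>
    push_cast
    rw [← add_assoc, h (p.1 + n, p.2), ih, add_assoc]

theorem map_add_intCast_of_map_add_one {f : ℝ × Y → ℝ × Y}
    (h : ∀ p : ℝ × Y, f (p.1 + 1, p.2) = ((f p).1 + 1, (f p).2)) (n : ℤ) (p : ℝ × Y) :
    f (p.1 + n, p.2) = ((f p).1 + n, (f p).2) := by
  obtain ⟨m, rfl | rfl⟩ := n.eq_nat_or_neg
  · exact_mod_cast map_add_natCast_of_map_add_one h m p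
  · have hm := map_add_natCast_of_map_add_one h m (p.1 - m, p.2)
    simp only [sub_add_cancel] at hm
    rw [hm]
    push_cast
    ext <;> simp [sub_eq_add_neg]

theorem eq_zero_of_comp_self_eq_shift [Nonempty Y] {G : ℝ × Y → ℝ × Y}
    (hG : ∀ (n : ℤ) (p : ℝ × Y), G (p.1 + n, p.2) = ((G p).1 - n, (G p).2))
    {l : ℤ} (hl : ∀ z : ℝ × Y, G (G z) = (z.1 + l, z.2)) : l = 0 := by
  obtain ⟨z⟩ : Nonempty (ℝ × Y) := inferInstance
  have h : ((G z).1 + l, (G z).2) = ((G z).1 - l, (G z).2) := by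
    rw [← hl (G z), ← hG l z, ← hl z]
  have : (l : ℝ) = 0 := by linarith [congrArg Prod.fst h]
  exact_mod_cast this

end Strip

/-- If `F` is a homeomorphism of `ℝ × [0,1]` commuting with the translation
`T(x,y) = (x+1,y)` and `F ∘ S ∘ F ∘ S = T^l` for the reflection
`S(x,y) = (−x,y)` and some `l ∈ ℤ`, then `l = 0`; in particular `F ∘ S` is an
involution. -/
theorem lift_reversible_involution (F : StripC ≃ₜ StripC)
    (hcomm : ∀ p, F (deckC p) = deckC (F p))
    (l : ℤ) (hl : ∀ z : StripC, F (reflS (F (reflS z))) = (z.1 + (l : ℝ), z.2)) :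
    l = 0 ∧ ∀ z : StripC, F (reflS (F (reflS z))) = z := by
  have hF := map_add_intCast_of_map_add_one (f := F) hcomm
  have hG : ∀ (n : ℤ) (p : StripC),
      F (reflS (p.1 + n, p.2)) = ((F (reflS p)).1 - n, (F (reflS p)).2) := by
    intro n p
    have := hF (-n) (reflS p)
    simpa only [reflS, Int.cast_neg, ← sub_eq_add_neg, neg_add'] using this
  have hl0 : l = 0 := eq_zero_of_comp_self_eq_shift (G := F ∘ reflS) hG hl
  refine ⟨hl0, fun z => ?_⟩
  simpa [hl0] using hl z
end

section
/- Let F be a homeomorphism of the strip ℝ × (0,1) commuting with T(x,y) = (x+1,y), and suppose that F maps the vertical segment {0} × (0,1) into the open right half {(x,y) : x > 0} and maps {(x,y) : x > 0} into itself. Then for every z̃ ∈ ℝ × (0,1) and every n ≥ 1, p₁(F^[n](z̃)) > p₁(z̃) − 1. Consequently, if F is a lift of a homeomorphism f of the open annulus (ℝ/ℤ) × (0,1), then every positively recurrent point of f that has a rotation number ρ for F satisfies ρ ≥ 0. -/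
open Filter Topology

/-- The circle `ℝ/ℤ`. -/
abbrev Circle1 : Type := AddCircle (1 : ℝ)

/-- The open annulus `(ℝ/ℤ) × (0,1)`. -/
abbrev AnnO : Type := Circle1 × ↥(Set.Ioo (0 : ℝ) 1)

/-- The universal covering space `ℝ × (0,1)` of the open annulus. -/
abbrev StripO : Type := ℝ × ↥(Set.Ioo (0 : ℝ) 1)

/-- The covering map `π(x, y) = (x mod 1, y)`. -/
noncomputable def projO : StripO → AnnO := fun p => ((p.1 : Circle1), p.2)

/-- The deck transformation `T(x, y) = (x + 1, y)`. -/
def deckO : StripO → StripO := fun p => (p.1 + 1, p.2)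

/-- `z` is positively recurrent for `f`. -/
def PosRecurrentO (f : AnnO → AnnO) (z : AnnO) : Prop :=
  ∀ U ∈ 𝓝 z, ∀ N : ℕ, ∃ n ≥ N, f^[n] z ∈ U

/-- The positively recurrent point `z` has rotation number `ρ` for the lift `F`. -/
def HasRotNumO (f : AnnO → AnnO) (F : StripO → StripO) (z : AnnO) (ρ : ℝ) : Prop :=
  ∀ zt : StripO, projO zt = z →
    ∀ n : ℕ → ℕ, StrictMono n → (∀ j, 0 < n j) →
      Tendsto (fun j => f^[n j] z) atTop (𝓝 z) →
      Tendsto (fun j => ((F^[n j] zt).1 - zt.1) / (n j : ℝ)) atTop (𝓝 ρ)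

/-!
Commuting with `T`, the map `F` commutes with every integer translation, so the hypotheses on
`{0} × (0,1)` and on the right half transport to: if `k ≤ p₁(p)` for an integer `k`, then
`k < p₁(F p)`. Hence every half strip `{k ≤ x}` is forward invariant, and starting from
`k = ⌊p₁(z̃)⌋` the orbit stays to the right of `p₁(z̃) - 1`. Along a recurrence sequence the
displacement divided by the time is therefore at least `-1 / n_k → 0`, so `ρ ≥ 0`.
-/

lemma deckO_iterate_apply (m : ℕ) (p : StripO) : deckO^[m] p = (p.1 + m, p.2) := by
  induction m with
  | zero => simp
  | succ m ih =>
    rw [Function.iterate_succ_apply', ih]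
    simp only [deckO, Nat.cast_succ, add_assoc]

lemma projO_surjective : Function.Surjective projO := by
  rintro ⟨x, y⟩
  obtain ⟨x, rfl⟩ := QuotientAddGroup.mk_surjective x
  exact ⟨(x, y), rfl⟩

section Drift

variable {F : StripO → StripO} (hcomm : Function.Commute F deckO)
include hcomm

lemma fst_apply_add_natCast (m : ℕ) (q : StripO) : (F (q.1 + m, q.2)).1 = (F q).1 + m := by
  rw [← deckO_iterate_apply, (hcomm.iterate_right m).eq, deckO_iterate_apply]

theorem int_lt_fst_of_le_fst (hnonneg : ∀ p : StripO, 0 ≤ p.1 → 0 < (F p).1) (k : ℤ)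
    {p : StripO} (hp : (k : ℝ) ≤ p.1) : (k : ℝ) < (F p).1 := by
  obtain ⟨m, rfl | rfl⟩ := Int.eq_nat_or_neg k
  · have hq := hnonneg (p.1 - m, p.2) (by simpa using hp)
    have h := fst_apply_add_natCast hcomm m (p.1 - m, p.2)
    simp only [sub_add_cancel] at h
    push_cast
    linarith
  · push_cast at hp ⊢
    have hq := hnonneg (p.1 + m, p.2) (by simp only; linarith)
    rw [fst_apply_add_natCast hcomm] at hq
    linarith

theorem sub_one_lt_fst_iterate (hnonneg : ∀ p : StripO, 0 ≤ p.1 → 0 < (F p).1) (zt : StripO)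
    {n : ℕ} (hn : 1 ≤ n) : zt.1 - 1 < (F^[n] zt).1 := by
  set k := ⌊zt.1⌋
  have hmaps : Set.MapsTo F {p : StripO | (k : ℝ) ≤ p.1} {p | (k : ℝ) < p.1} :=
    fun _ => int_lt_fst_of_le_fst hcomm hnonneg k
  have hinv : Set.MapsTo F {p : StripO | (k : ℝ) ≤ p.1} {p | (k : ℝ) ≤ p.1} :=
    hmaps.mono_right fun _ (hp : (k : ℝ) < _) => hp.le
  obtain ⟨m, rfl⟩ := Nat.exists_eq_add_of_le' hn
  have hk : (k : ℝ) < (F^[m + 1] zt).1 := by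
    rw [Function.iterate_succ_apply']
    exact hmaps (hinv.iterate m (Int.floor_le zt.1))
  linarith [Int.sub_one_lt_floor zt.1]

end Drift

theorem PosRecurrentO.exists_strictMono_tendsto {f : AnnO → AnnO} {z : AnnO}
    (hz : PosRecurrentO f z) :
    ∃ φ : ℕ → ℕ, StrictMono φ ∧ (∀ j, 0 < φ j) ∧ Tendsto (fun j => f^[φ j] z) atTop (𝓝 z) := by
  obtain ⟨U, hU⟩ := (𝓝 z).exists_antitone_basis
  have hfreq (j : ℕ) : ∃ᶠ k in atTop, 0 < k ∧ f^[k] z ∈ U j := by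
    refine frequently_atTop.2 fun a => ?_
    obtain ⟨n, hn, hnU⟩ := hz (U j) (hU.mem j) (a + 1)
    exact ⟨n, by omega, by omega, hnU⟩
  obtain ⟨φ, hφ, hφU⟩ := extraction_forall_of_frequently hfreq
  exact ⟨φ, hφ, fun j => (hφU j).1, hU.tendsto fun j => (hφU j).2⟩

theorem nonneg_of_tendsto_div_of_le {φ : ℕ → ℕ} (hφ : Tendsto φ atTop atTop) {u : ℕ → ℝ}
    {c ρ : ℝ} (hu : ∀ j, c ≤ u j) (hρ : Tendsto (fun j => u j / φ j) atTop (𝓝 ρ)) :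
    0 ≤ ρ :=
  le_of_tendsto_of_tendsto' ((tendsto_const_div_atTop_nhds_zero_nat c).comp hφ) hρ
    fun j => div_le_div_of_nonneg_right (hu j) (Nat.cast_nonneg _)

/-- If a homeomorphism `F` of the strip `ℝ × (0,1)` commutes with the
translation `T(x,y) = (x+1,y)`, maps the segment `{0} × (0,1)` into the open
right half-plane, and maps the open right half-plane into itself, then every
forward orbit drifts to the right: `p₁(F^[n](z̃)) > p₁(z̃) − 1` for `n ≥ 1`.
Consequently, if `F` is a lift of a homeomorphism `f` of the open annulus, then
every positively recurrent point of `f` having a rotation number `ρ` for `F`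
satisfies `ρ ≥ 0`. -/
theorem strip_drift_right (F : StripO ≃ₜ StripO)
    (hcomm : ∀ p, F (deckO p) = deckO (F p))
    (hseg : ∀ y : ↥(Set.Ioo (0 : ℝ) 1), 0 < (F (0, y)).1)
    (hhalf : ∀ p : StripO, 0 < p.1 → 0 < (F p).1) :
    (∀ zt : StripO, ∀ n : ℕ, 1 ≤ n → zt.1 - 1 < ((⇑F)^[n] zt).1) ∧
      (∀ f : AnnO ≃ₜ AnnO, (∀ p, projO (F p) = f (projO p)) →
        ∀ z : AnnO, ∀ ρ : ℝ, PosRecurrentO f z → HasRotNumO f F z ρ → 0 ≤ ρ) := by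
  have hnonneg : ∀ p : StripO, 0 ≤ p.1 → 0 < (F p).1 := by
    rintro ⟨x, y⟩ (hx : 0 ≤ x)
    rcases hx.eq_or_lt with rfl | hx
    · exact hseg y
    · exact hhalf _ hx
  have hdrift (zt : StripO) {n : ℕ} (hn : 1 ≤ n) : zt.1 - 1 < ((⇑F)^[n] zt).1 :=
    sub_one_lt_fst_iterate hcomm hnonneg zt hn
  refine ⟨fun zt n hn => hdrift zt hn, fun f _ z ρ hrec hrot => ?_⟩
  obtain ⟨zt, rfl⟩ := projO_surjective z
  obtain ⟨φ, hφ, hpos, hφz⟩ := hrec.exists_strictMono_tendsto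
  exact nonneg_of_tendsto_div_of_le hφ.tendsto_atTop (c := -1)
    (fun j => by linarith [hdrift zt (hpos j)]) (hrot zt rfl φ hφ hpos hφz)
end
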